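/- Let A : ℝ → Matrix (n×n, ℝ) be differentiable at t₀ with A(t) symmetric for all t in a neighborhood of t₀, and let λ : ℝ → ℝ and u : ℝ → ℝⁿ be differentiable at t₀ and satisfy A(t)·u(t) = λ(t)·u(t) and ‖u(t)‖ = 1 for all t in a neighborhood of t₀. Suppose (v₁, …, vₙ) is an orthonormal basis of ℝⁿ with A(t₀)·vⱼ = μⱼ·vⱼ for pairwise distinct real numbers μ₁, …, μₙ, and suppose u(t₀) = v_k and λ(t₀) = μ_k for some index k. Then u′(t₀) = Σ_{j ≠ k} (⟨vⱼ, A′(t₀)·v_k⟩ / (μ_k − μⱼ)) · vⱼ. -/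

import Mathlib

/-!
Differentiating `A u = λ u` at `t₀` gives `A′ v_k + A(t₀) u′ = λ′ v_k + μ_k u′`. Pairing with `v_j`
and moving the symmetric `A(t₀)` onto `v_j` leaves `⟨v_j, A′ v_k⟩ = (μ_k - μ_j) ⟨v_j, u′⟩`, which
determines every coefficient of `u′` except the `k`-th; that one vanishes because `‖u‖` is
constant, so `u′ ⊥ u(t₀) = v_k`.
-/

open scoped InnerProductSpace

attribute [local instance] Matrix.normedAddCommGroup Matrix.normedSpace

open Topology

theorem HasDerivAt.inner_eq_zero_of_eventually_norm_eq {F : Type*} [NormedAddCommGroup F]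
    [InnerProductSpace ℝ F] {u : ℝ → F} {u' : F} {t₀ c : ℝ} (hu : HasDerivAt u u' t₀)
    (hnorm : ∀ᶠ t in 𝓝 t₀, ‖u t‖ = c) : ⟪u t₀, u'⟫_ℝ = 0 := by
  have hconst : (‖u ·‖ ^ 2) =ᶠ[𝓝 t₀] fun _ => c ^ 2 := by
    filter_upwards [hnorm] with t ht
    rw [ht]
  have h := (hu.norm_sq.congr_of_eventuallyEq hconst.symm).unique (hasDerivAt_const t₀ (c ^ 2))
  exact (mul_eq_zero.mp h).resolve_left two_ne_zero

theorem HasDerivAt.clm_apply_add_eq_of_eventually_eq_smul {E : Type*}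
    [NormedAddCommGroup E] [NormedSpace ℝ E] {T : ℝ → E →L[ℝ] E} {T' : E →L[ℝ] E}
    {u : ℝ → E} {u' : E} {lam : ℝ → ℝ} {lam' t₀ : ℝ} (hT : HasDerivAt T T' t₀) (hu : HasDerivAt u u' t₀)
    (hlam : HasDerivAt lam lam' t₀) (heig : ∀ᶠ t in 𝓝 t₀, T t (u t) = lam t • u t) :
    T' (u t₀) + T t₀ u' = lam t₀ • u' + lam' • u t₀ :=
  (hT.clm_apply hu).unique ((hlam.smul hu).congr_of_eventuallyEq heig)

theorem LinearMap.IsSymmetric.inner_eq_div_of_apply_add_apply_eq {E : Type*}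
    [NormedAddCommGroup E] [InnerProductSpace ℝ E] {T : E →ₗ[ℝ] E} (hT : T.IsSymmetric)
    {B : E →ₗ[ℝ] E} {x w v : E} {ν ν' μ : ℝ} (heq : B x + T w = ν • w + ν' • x)
    (hv : T v = μ • v) (hvx : ⟪v, x⟫_ℝ = 0) (hμ : μ ≠ ν) :
    ⟪v, w⟫_ℝ = ⟪v, B x⟫_ℝ / (ν - μ) := by
  have h := congrArg (⟪v, ·⟫_ℝ) heq
  simp only [inner_add_right, real_inner_smul_right, ← hT v w, hv, real_inner_smul_left, hvx,
    mul_zero, add_zero] at h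
  rw [eq_div_iff (sub_ne_zero.mpr hμ.symm)]
  linarith

theorem Matrix.hasDerivAt_toEuclideanCLM {n : Type*} [Fintype n] [DecidableEq n]
    {A : ℝ → Matrix n n ℝ} {A' : Matrix n n ℝ} {t₀ : ℝ} (hA : HasDerivAt A A' t₀) :
    HasDerivAt (fun t => toEuclideanCLM (𝕜 := ℝ) (A t)) (toEuclideanCLM (𝕜 := ℝ) A') t₀ :=
  (LinearMap.toContinuousLinearMap
    (toEuclideanCLM (n := n) (𝕜 := ℝ)).toAlgEquiv.toLinearMap).hasFDerivAt.comp_hasDerivAt t₀ hA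

/-- Eigenvector derivative expansion in an orthonormal eigenbasis with simple spectrum:
`u′(t₀) = Σ_{j ≠ k} (⟨vⱼ, A′(t₀)v_k⟩ / (μ_k − μⱼ)) vⱼ`. -/
theorem stmt_3 (n : ℕ) (A : ℝ → Matrix (Fin n) (Fin n) ℝ)
    (A' : Matrix (Fin n) (Fin n) ℝ) (lam : ℝ → ℝ) (lam' : ℝ)
    (u : ℝ → EuclideanSpace ℝ (Fin n)) (u' : EuclideanSpace ℝ (Fin n)) (t₀ : ℝ)
    (hA : HasDerivAt A A' t₀)
    (hsymm : ∀ᶠ t in nhds t₀, (A t).IsSymm)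
    (hlam : HasDerivAt lam lam' t₀)
    (hu : HasDerivAt u u' t₀)
    (heig : ∀ᶠ t in nhds t₀, (A t).mulVec (u t) = lam t • u t)
    (hnorm : ∀ᶠ t in nhds t₀, ‖u t‖ = 1)
    (v : Fin n → EuclideanSpace ℝ (Fin n)) (μ : Fin n → ℝ)
    (hON : Orthonormal ℝ v) (hbasis : ⊤ ≤ Submodule.span ℝ (Set.range v))
    (hv : ∀ j, (A t₀).mulVec (v j) = μ j • v j)
    (hdist : Function.Injective μ)
    (k : Fin n) (huk : u t₀ = v k) (hlamk : lam t₀ = μ k) :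
    u' = ∑ j ∈ Finset.univ.erase k, (⟪v j, WithLp.toLp 2 (A'.mulVec (v k))⟫_ℝ / (μ k - μ j)) • v j := by
  have heigT : ∀ᶠ t in 𝓝 t₀, Matrix.toEuclideanCLM (𝕜 := ℝ) (A t) (u t) = lam t • u t := by
    filter_upwards [heig] with t ht
    exact congrArg (WithLp.toLp 2) ht
  have hderiv := (Matrix.hasDerivAt_toEuclideanCLM hA).clm_apply_add_eq_of_eventually_eq_smul
    hu hlam heigT
  rw [huk, hlamk] at hderiv
  have hsymm₀ : (A t₀).toEuclideanLin.IsSymmetric :=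
    Matrix.isSymmetric_toEuclideanLin_iff.mpr
      (Matrix.isHermitian_iff_isSymm.mpr hsymm.self_of_nhds)
  have hk : ⟪v k, u'⟫_ℝ = 0 := huk ▸ hu.inner_eq_zero_of_eventually_norm_eq hnorm
  have hcoeff (j : Fin n) (hj : j ≠ k) :
      ⟪v j, u'⟫_ℝ = ⟪v j, WithLp.toLp 2 (A'.mulVec (v k))⟫_ℝ / (μ k - μ j) :=
    hsymm₀.inner_eq_div_of_apply_add_apply_eq (B := A'.toEuclideanLin) hderiv
      (congrArg (WithLp.toLp 2) (hv j)) (hON.2 hj) (hdist.ne hj)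
  set b := OrthonormalBasis.mk hON hbasis
  have hb : ⇑b = v := OrthonormalBasis.coe_mk hON hbasis
  conv_lhs => rw [← b.sum_repr' u', ← Finset.add_sum_erase _ _ (Finset.mem_univ k)]
  rw [hb, hk, zero_smul, zero_add]
  exact Finset.sum_congr rfl fun j hj => by rw [hcoeff j (Finset.ne_of_mem_erase hj)]
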